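/- Let r_0, b, e, f, d > 0 and T ≥ 0 be given, and suppose that for every step size η ∈ (0, 1/d] one has Ψ_T(η) ≤ r_0/(η(T+1)) + bη + eη² + fη³. Then there exists a step size η ∈ (0, 1/d] such that Ψ_T(η) ≤ 2(b r_0/(T+1))^{1/2} + 2 e^{1/3} (r_0/(T+1))^{2/3} + 2 f^{1/4} (r_0/(T+1))^{3/4} + d r_0/(T+1). -/

import Mathlib

lemma stepsize_aux1 (x y p : ℝ) (hx : 0 < x) (hy : 0 < y) :
    x * (y / x) ^ p = x ^ (1 - p) * y ^ p := by
  rw [Real.div_rpow hy.le hx.le, Real.rpow_sub hx, Real.rpow_one]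
  have hxp : (0:ℝ) < x ^ p := Real.rpow_pos_of_pos hx p
  field_simp

lemma stepsize_aux2 (x R p : ℝ) (hx : 0 < x) (hR : 0 < R) :
    R / (R / x) ^ p = x ^ p * R ^ (1 - p) := by
  rw [Real.div_rpow hR.le hx.le, Real.rpow_sub hR, Real.rpow_one]
  have hxp : (0:ℝ) < x ^ p := Real.rpow_pos_of_pos hx p
  have hRp : (0:ℝ) < R ^ p := Real.rpow_pos_of_pos hR p
  field_simp

/-- Step-size tuning lemma. -/
theorem stepsize_tuning (Ψ : ℝ → ℝ) (r0 b e f d : ℝ) (T : ℕ)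
    (hr0 : 0 < r0) (hb : 0 < b) (he : 0 < e) (hf : 0 < f) (hd : 0 < d)
    (h : ∀ η : ℝ, 0 < η → η ≤ 1 / d →
      Ψ η ≤ r0 / (η * (T + 1)) + b * η + e * η ^ 2 + f * η ^ 3) :
    ∃ η : ℝ, 0 < η ∧ η ≤ 1 / d ∧
      Ψ η ≤ 2 * (b * r0 / (T + 1)) ^ ((1 : ℝ) / 2)
        + 2 * e ^ ((1 : ℝ) / 3) * (r0 / (T + 1)) ^ ((2 : ℝ) / 3)
        + 2 * f ^ ((1 : ℝ) / 4) * (r0 / (T + 1)) ^ ((3 : ℝ) / 4)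
        + d * r0 / (T + 1) := by
  have hT : (0:ℝ) < (T : ℝ) + 1 := by positivity
  set R : ℝ := r0 / (T + 1) with hRdef
  have hR : 0 < R := div_pos hr0 hT
  set η1 : ℝ := (R / b) ^ ((1:ℝ)/2) with hη1def
  set η2 : ℝ := (R / e) ^ ((1:ℝ)/3) with hη2def
  set η3 : ℝ := (R / f) ^ ((1:ℝ)/4) with hη3def
  set η4 : ℝ := 1 / d with hη4def
  have hη1 : 0 < η1 := Real.rpow_pos_of_pos (div_pos hR hb) _
  have hη2 : 0 < η2 := Real.rpow_pos_of_pos (div_pos hR he) _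
  have hη3 : 0 < η3 := Real.rpow_pos_of_pos (div_pos hR hf) _
  have hη4 : 0 < η4 := by positivity
  set η : ℝ := min η1 (min η2 (min η3 η4)) with hηdef
  have hη : 0 < η := lt_min hη1 (lt_min hη2 (lt_min hη3 hη4))
  have hle1 : η ≤ η1 := min_le_left _ _
  have hle2 : η ≤ η2 := le_trans (min_le_right _ _) (min_le_left _ _)
  have hle3 : η ≤ η3 :=
    le_trans (min_le_right _ _) (le_trans (min_le_right _ _) (min_le_left _ _))
  have hle4 : η ≤ η4 :=
    le_trans (min_le_right _ _) (le_trans (min_le_right _ _) (min_le_right _ _))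
  -- the four target terms
  set A : ℝ := b ^ ((1:ℝ)/2) * R ^ ((1:ℝ)/2) with hAdef
  set B : ℝ := e ^ ((1:ℝ)/3) * R ^ ((2:ℝ)/3) with hBdef
  set C : ℝ := f ^ ((1:ℝ)/4) * R ^ ((3:ℝ)/4) with hCdef
  set D : ℝ := d * R with hDdef
  have hA : 0 < A := by
    exact mul_pos (Real.rpow_pos_of_pos hb _) (Real.rpow_pos_of_pos hR _)
  have hB : 0 < B := by
    exact mul_pos (Real.rpow_pos_of_pos he _) (Real.rpow_pos_of_pos hR _)
  have hC : 0 < C := by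
    exact mul_pos (Real.rpow_pos_of_pos hf _) (Real.rpow_pos_of_pos hR _)
  have hD : 0 < D := mul_pos hd hR
  -- term bounds
  have hbη : b * η ≤ A := by
    have : b * η ≤ b * η1 := mul_le_mul_of_nonneg_left hle1 hb.le
    refine this.trans (le_of_eq ?_)
    rw [hη1def, stepsize_aux1 b R ((1:ℝ)/2) hb hR]
    norm_num [hAdef]
  have heη : e * η ^ 2 ≤ B := by
    have h2 : η ^ 2 ≤ η2 ^ 2 := pow_le_pow_left₀ hη.le hle2 2
    have : e * η ^ 2 ≤ e * η2 ^ 2 := mul_le_mul_of_nonneg_left h2 he.le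
    refine this.trans (le_of_eq ?_)
    have hsq : η2 ^ 2 = (R / e) ^ ((2:ℝ)/3) := by
      rw [hη2def, ← Real.rpow_natCast ((R / e) ^ ((1:ℝ)/3)) 2,
        ← Real.rpow_mul (le_of_lt (div_pos hR he))]
      norm_num
    rw [hsq]
    have := stepsize_aux1 e R ((2:ℝ)/3) he hR
    rw [this]
    norm_num [hBdef]
  have hfη : f * η ^ 3 ≤ C := by
    have h3 : η ^ 3 ≤ η3 ^ 3 := pow_le_pow_left₀ hη.le hle3 3
    have : f * η ^ 3 ≤ f * η3 ^ 3 := mul_le_mul_of_nonneg_left h3 hf.le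
    refine this.trans (le_of_eq ?_)
    have hcb : η3 ^ 3 = (R / f) ^ ((3:ℝ)/4) := by
      rw [hη3def, ← Real.rpow_natCast ((R / f) ^ ((1:ℝ)/4)) 3,
        ← Real.rpow_mul (le_of_lt (div_pos hR hf))]
      norm_num
    rw [hcb]
    rw [stepsize_aux1 f R ((3:ℝ)/4) hf hR]
    norm_num [hCdef]
  -- bound on R/η
  have hRη : R / η ≤ A + B + C + D := by
    have e1 : R / η1 = A := by
      rw [hη1def, stepsize_aux2 b R ((1:ℝ)/2) hb hR]; norm_num [hAdef]
    have e2 : R / η2 = B := by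
      rw [hη2def, stepsize_aux2 e R ((1:ℝ)/3) he hR]; norm_num [hBdef]
    have e3 : R / η3 = C := by
      rw [hη3def, stepsize_aux2 f R ((1:ℝ)/4) hf hR]; norm_num [hCdef]
    have e4 : R / η4 = D := by
      rw [hη4def, hDdef]; field_simp
    have hc1 := min_choice η1 (min η2 (min η3 η4))
    have hc2 := min_choice η2 (min η3 η4)
    have hc3 := min_choice η3 η4
    rcases hc1 with h1 | h1
    · rw [hηdef, h1, e1]; linarith
    · rw [hηdef, h1]
      rcases hc2 with h2 | h2
      · rw [h2, e2]; linarith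
      · rw [h2]
        rcases hc3 with h3 | h3
        · rw [h3, e3]; linarith
        · rw [h3, e4]; linarith
  refine ⟨η, hη, hle4, ?_⟩
  have hbound := h η hη hle4
  have hrw : r0 / (η * (T + 1)) = R / η := by
    rw [hRdef, div_div, mul_comm η ((T:ℝ)+1)]
  rw [hrw] at hbound
  have hgoal : 2 * (b * r0 / (T + 1)) ^ ((1 : ℝ) / 2)
        + 2 * e ^ ((1 : ℝ) / 3) * (r0 / (T + 1)) ^ ((2 : ℝ) / 3)
        + 2 * f ^ ((1 : ℝ) / 4) * (r0 / (T + 1)) ^ ((3 : ℝ) / 4)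
        + d * r0 / (T + 1) = 2 * A + 2 * B + 2 * C + D := by
    have hbr : b * r0 / (T + 1) = b * R := by rw [hRdef]; ring
    rw [hbr, Real.mul_rpow hb.le hR.le, hAdef, hBdef, hCdef, hDdef, hRdef]
    ring
  rw [hgoal]
  linarith
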